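/- Let d ≥ 1, t > 0, let Σ̄_0, …, Σ̄_{m−1} ⊆ ℝ^d be measurable sets of finite Lebesgue measure, and let γ_0, …, γ_{m−1} be real numbers with Σ_{i=0}^{m−1} γ_i = 1. Define Σ̄_m = { x ∈ ℝ^d : (G_t * Σ_{i=0}^{m−1} γ_i 1_{Σ̄_i})(x) ≥ 1/2 }. Then for every measurable set S ⊆ ℝ^d of finite Lebesgue measure, F(Σ̄_m) ≤ F(S), where F(Σ) = ∫_{ℝ^d} (1 − 1_Σ)(Gْ_t * 1_Σ) dx + Σ_{i=0}^{m−1} γ_i ∫_{ℝ^d} (1_Σ − 1_{Σ̄_i}) · (G_t * (1_Σ − 1_{Σ̄_i})) dx (here G_t denotes the Gaussian kernel); i.e., each stage of the multistage threshold dynamics scheme is the minimizing movements step of the threshold-dynamics energy with respect to the weighted sum of squared G_t-distances to the previous stages. -/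

import Mathlib

open MeasureTheory

/-- The Gaussian kernel on `ℝ^d` at time `t`. -/
noncomputable def gaussKer (d : ℕ) (t : ℝ) (x : EuclideanSpace ℝ (Fin d)) : ℝ :=
  (4 * Real.pi * t) ^ (-(d : ℝ) / 2) * Real.exp (-‖x‖ ^ 2 / (4 * t))

/-- Convolution of the Gaussian kernel on `ℝ^d` with a function. -/
noncomputable def gaussConv (d : ℕ) (t : ℝ) (u : EuclideanSpace ℝ (Fin d) → ℝ)
    (x : EuclideanSpace ℝ (Fin d)) : ℝ :=
  ∫ y : EuclideanSpace ℝ (Fin d), gaussKer d t (x - y) * u y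

/-- The relaxed functional of one stage of the multistage threshold dynamics scheme:
`F(Σ) = ∫ (1 − 1_Σ)(G_t * 1_Σ) + Σ_i γ_i ∫ (1_Σ − 1_{Σ̄_i})(G_t * (1_Σ − 1_{Σ̄_i}))`. -/
noncomputable def stageFunctional (d : ℕ) (t : ℝ) (m : ℕ) (γ : ℕ → ℝ)
    (Sb : ℕ → Set (EuclideanSpace ℝ (Fin d))) (S : Set (EuclideanSpace ℝ (Fin d))) : ℝ :=
  (∫ x : EuclideanSpace ℝ (Fin d),
      (1 - Set.indicator S 1 x) * gaussConv d t (Set.indicator S 1) x) +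
  ∑ i ∈ Finset.range m, γ i *
    ∫ x : EuclideanSpace ℝ (Fin d),
      (Set.indicator S 1 x - Set.indicator (Sb i) 1 x) *
        gaussConv d t (fun y => Set.indicator S 1 y - Set.indicator (Sb i) 1 y) x

/-!
Write `w = ∑ γ_i 1_{Σ̄_i}` and `B(u, v) = ∫ u (G_t * v)`, a symmetric bilinear form on integrable
functions. Since `∫ G_t = 1`, the threshold-dynamics term of `F(Σ)` is `|Σ| - B(1_Σ, 1_Σ)`, and
expanding `B(1_Σ - 1_{Σ̄_i}, 1_Σ - 1_{Σ̄_i})` with `∑ γ_i = 1` cancels the quadratic term: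
`F(Σ) = ∫_Σ (1 - 2 G_t * w) + const`. A set integral `∫_Σ f` is minimised by `Σ = {f ≤ 0}`,
which for this `f` is `Σ̄_m`.
-/

theorem LinearMap.BilinForm.IsSymm.sum_mul_apply_sub_sub {R M ι : Type*} [CommRing R]
    [AddCommGroup M] [Module R M] {B : LinearMap.BilinForm R M} (hB : B.IsSymm)
    {s : Finset ι} {γ : ι → R} (hγ : ∑ i ∈ s, γ i = 1) (u : M) (v : ι → M) :
    ∑ i ∈ s, γ i * B (u - v i) (u - v i) =
      B u u - 2 * B u (∑ i ∈ s, γ i • v i) + ∑ i ∈ s, γ i * B (v i) (v i) := by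
  have hexpand : ∀ i, B (u - v i) (u - v i) = B u u - 2 * B u (v i) + B (v i) (v i) := fun i => by
    simp only [map_sub, LinearMap.sub_apply, hB.eq (v i) u]
    ring
  simp only [hexpand, mul_add, mul_sub, Finset.sum_add_distrib, Finset.sum_sub_distrib,
    ← Finset.sum_mul, hγ, map_sum, map_smul, smul_eq_mul, Finset.mul_sum]
  ring_nf

def MeasureTheory.integrableSubmodule {α : Type*} [MeasurableSpace α] (μ : Measure α) :
    Submodule ℝ (α → ℝ) where
  carrier := {u | Integrable u μ}
  add_mem' := Integrable.add
  zero_mem' := integrable_zero _ _ _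
  smul_mem' c _ hu := hu.smul c

section IndicatorIntegrals

variable {α : Type*} [MeasurableSpace α] {μ : Measure α} {S : Set α}

theorem integrable_indicator_one (hS : MeasurableSet S) (hSμ : μ S < ⊤) :
    Integrable (S.indicator (1 : α → ℝ)) μ :=
  (integrableOn_const hSμ.ne).integrable_indicator hS

theorem integral_indicator_one_mul (hS : MeasurableSet S) (f : α → ℝ) :
    ∫ x, S.indicator 1 x * f x ∂μ = ∫ x in S, f x ∂μ := by
  simp_rw [← Set.indicator_mul_left, Pi.one_apply, one_mul]
  exact integral_indicator hS

theorem setIntegral_setOf_nonpos_le {f : α → ℝ} (hS : MeasurableSet S)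
    (hN : MeasurableSet {x | f x ≤ 0}) (hfS : IntegrableOn f S μ)
    (hfN : IntegrableOn f {x | f x ≤ 0} μ) :
    ∫ x in {x | f x ≤ 0}, f x ∂μ ≤ ∫ x in S, f x ∂μ := by
  rw [← integral_indicator hS, ← integral_indicator hN]
  refine integral_mono (hfN.integrable_indicator hN) (hfS.integrable_indicator hS) fun x => ?_
  by_cases hxN : f x ≤ 0 <;> by_cases hxS : x ∈ S <;>
    simp [Set.indicator, hxN, hxS, le_of_not_ge]

end IndicatorIntegrals

section Gaussian

variable {d : ℕ} {t : ℝ} {u v : EuclideanSpace ℝ (Fin d) → ℝ}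

local notation "E" => EuclideanSpace ℝ (Fin d)

theorem continuous_gaussKer : Continuous (gaussKer d t) := by
  unfold gaussKer
  fun_prop

theorem gaussKer_sub_comm (x y : E) : gaussKer d t (x - y) = gaussKer d t (y - x) := by
  simp only [gaussKer, norm_sub_rev]

theorem norm_gaussKer_le (ht : 0 ≤ t) (x : E) :
    ‖gaussKer d t x‖ ≤ (4 * Real.pi * t) ^ (-(d : ℝ) / 2) := by
  have hexp : Real.exp (-‖x‖ ^ 2 / (4 * t)) ≤ 1 :=
    Real.exp_le_one_iff.2 (div_nonpos_of_nonpos_of_nonneg (by simp) (by positivity))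
  rw [gaussKer, norm_mul, Real.norm_of_nonneg (by positivity), Real.norm_of_nonneg (by positivity)]
  exact mul_le_of_le_one_right (by positivity) hexp

theorem integral_gaussKer (ht : 0 < t) : ∫ x : E, gaussKer d t x = 1 := by
  have h := GaussianFourier.integral_rexp_neg_mul_sq_norm (V := E) (b := 1 / (4 * t))
    (by positivity)
  have hexp : ∀ x : E, -‖x‖ ^ 2 / (4 * t) = -(1 / (4 * t)) * ‖x‖ ^ 2 := fun x => by ring
  have hπ : Real.pi / (1 / (4 * t)) = 4 * Real.pi * t := by field_simp
  simp only [gaussKer, integral_const_mul, hexp, h, finrank_euclideanSpace_fin, hπ]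
  rw [← Real.rpow_add (by positivity), neg_div, neg_add_cancel, Real.rpow_zero]

theorem integrable_gaussKer (ht : 0 < t) : Integrable (gaussKer d t) :=
  Integrable.of_integral_ne_zero (by rw [integral_gaussKer ht]; exact one_ne_zero)

theorem gaussConv_eq_convolution (u : E → ℝ) :
    gaussConv d t u = convolution u (gaussKer d t) (ContinuousLinearMap.mul ℝ ℝ) := by
  ext x
  simp only [gaussConv, convolution_def, ContinuousLinearMap.mul_apply', mul_comm]

theorem continuous_gaussConv (ht : 0 ≤ t) (hu : Integrable u) : Continuous (gaussConv d t u) := by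
  rw [gaussConv_eq_convolution]
  exact BddAbove.continuous_convolution_right_of_integrable _
    ⟨_, Set.forall_mem_range.2 (norm_gaussKer_le ht)⟩ hu continuous_gaussKer

theorem integrable_gaussConv (ht : 0 < t) (hu : Integrable u) : Integrable (gaussConv d t u) := by
  rw [gaussConv_eq_convolution]
  exact hu.integrable_convolution _ (integrable_gaussKer ht)

theorem integral_gaussConv (ht : 0 < t) (hu : Integrable u) :
    ∫ x, gaussConv d t u x = ∫ x, u x := by
  rw [gaussConv_eq_convolution, integral_convolution _ hu (integrable_gaussKer ht),
    integral_gaussKer ht, ContinuousLinearMap.mul_apply', mul_one]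

theorem integrable_gaussKer_sub_mul (ht : 0 ≤ t) (hu : Integrable u) (x : E) :
    Integrable fun y => gaussKer d t (x - y) * u y :=
  hu.bdd_mul (continuous_gaussKer.comp (continuous_sub_left x)).aestronglyMeasurable
    (ae_of_all _ fun y => norm_gaussKer_le ht (x - y))

theorem gaussConv_add (ht : 0 ≤ t) (hu : Integrable u) (hv : Integrable v) :
    gaussConv d t (u + v) = gaussConv d t u + gaussConv d t v := by
  ext x
  simp only [gaussConv, Pi.add_apply, mul_add]
  exact integral_add (integrable_gaussKer_sub_mul ht hu x) (integrable_gaussKer_sub_mul ht hv x)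

theorem gaussConv_smul (c : ℝ) (u : E → ℝ) : gaussConv d t (c • u) = c • gaussConv d t u := by
  ext x
  simp only [gaussConv, Pi.smul_apply, smul_eq_mul, mul_left_comm _ c, integral_const_mul]

theorem integrable_mul_gaussKer_mul (ht : 0 ≤ t) (hu : Integrable u) (hv : Integrable v) :
    Integrable (fun p : E × E => u p.1 * (gaussKer d t (p.1 - p.2) * v p.2))
      (volume.prod volume) := by
  have hK : AEStronglyMeasurable (fun p : E × E => gaussKer d t (p.1 - p.2)) (volume.prod volume) :=
    (continuous_gaussKer.comp continuous_sub).aestronglyMeasurable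
  refine ((hu.norm.mul_prod hv.norm).const_mul ((4 * Real.pi * t) ^ (-(d : ℝ) / 2))).mono'
    ((hu.aestronglyMeasurable.comp_quasiMeasurePreserving Measure.quasiMeasurePreserving_fst).mul
      (hK.mul (hv.aestronglyMeasurable.comp_quasiMeasurePreserving
        Measure.quasiMeasurePreserving_snd))) (ae_of_all _ fun p => ?_)
  rw [norm_mul, norm_mul, mul_left_comm]
  exact mul_le_mul_of_nonneg_right (norm_gaussKer_le ht _) (by positivity)

theorem integrable_mul_gaussConv (ht : 0 ≤ t) (hu : Integrable u) (hv : Integrable v) :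
    Integrable fun x => u x * gaussConv d t v x := by
  simpa only [gaussConv, integral_const_mul] using
    (integrable_mul_gaussKer_mul ht hu hv).integral_prod_left

theorem integral_mul_gaussConv_comm (ht : 0 ≤ t) (hu : Integrable u) (hv : Integrable v) :
    ∫ x, u x * gaussConv d t v x = ∫ x, v x * gaussConv d t u x := by
  simp only [gaussConv, ← integral_const_mul]
  rw [integral_integral_swap (integrable_mul_gaussKer_mul ht hu hv)]
  congr 1 with y
  congr 1 with x
  rw [gaussKer_sub_comm]
  ring

noncomputable def gaussForm (ht : 0 ≤ t) :
    LinearMap.BilinForm ℝ (integrableSubmodule (volume : Measure E)) :=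
  LinearMap.mk₂ ℝ (fun u v => ∫ x, (u : E → ℝ) x * gaussConv d t v x)
    (fun u u' v => by
      simp only [Submodule.coe_add, Pi.add_apply, add_mul]
      exact integral_add (integrable_mul_gaussConv ht u.2 v.2)
        (integrable_mul_gaussConv ht u'.2 v.2))
    (fun c u v => by
      simp only [Submodule.coe_smul, Pi.smul_apply, smul_eq_mul, mul_assoc, integral_const_mul])
    (fun u v v' => by
      simp only [Submodule.coe_add, gaussConv_add ht v.2 v'.2, Pi.add_apply, mul_add]
      exact integral_add (integrable_mul_gaussConv ht u.2 v.2)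
        (integrable_mul_gaussConv ht u.2 v'.2))
    (fun c u v => by
      simp only [Submodule.coe_smul, gaussConv_smul, Pi.smul_apply, smul_eq_mul, mul_left_comm _ c,
        integral_const_mul])

theorem gaussForm_isSymm (ht : 0 ≤ t) : (gaussForm (d := d) ht).IsSymm :=
  ⟨fun u v => integral_mul_gaussConv_comm ht u.2 v.2⟩

theorem stageFunctional_eq (ht : 0 < t) {m : ℕ} {Sb : ℕ → Set E}
    (hSb : ∀ i < m, MeasurableSet (Sb i) ∧ volume (Sb i) < ⊤) {γ : ℕ → ℝ}
    (hγ : ∑ i ∈ Finset.range m, γ i = 1) {S : Set E} (hS : MeasurableSet S)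
    (hSv : volume S < ⊤) :
    stageFunctional d t m γ Sb S =
      (∫ x in S, (1 - 2 * gaussConv d t
        (fun y => ∑ i ∈ Finset.range m, γ i * (Sb i).indicator 1 y) x)) +
      ∑ i ∈ Finset.range m,
        γ i * ∫ x, (Sb i).indicator 1 x * gaussConv d t ((Sb i).indicator 1) x := by
  set B := gaussForm (d := d) ht.le
  let s : integrableSubmodule (volume : Measure E) :=
    ⟨S.indicator 1, integrable_indicator_one hS hSv⟩
  let v : Fin m → integrableSubmodule (volume : Measure E) := fun i =>
    ⟨(Sb i).indicator 1, integrable_indicator_one (hSb i i.2).1 (hSb i i.2).2⟩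
  let w : integrableSubmodule (volume : Measure E) := ∑ i : Fin m, γ i • v i
  have hw : (fun y => ∑ i ∈ Finset.range m, γ i * (Sb i).indicator 1 y) =
      (w : E → ℝ) := by
    ext y
    simp [w, v, Finset.sum_range, Finset.sum_apply]
  rw [hw]
  have hthreshold : ∫ x, (1 - S.indicator 1 x) * gaussConv d t (S.indicator 1) x =
      (∫ _ in S, (1 : ℝ)) - B s s := by
    simp only [sub_mul, one_mul]
    rw [integral_sub (integrable_gaussConv ht s.2) (integrable_mul_gaussConv ht.le s.2 s.2),
      integral_gaussConv ht s.2, ← integral_indicator hS]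
    rfl
  have hcross : B s w = ∫ x in S, gaussConv d t w x := integral_indicator_one_mul hS _
  calc stageFunctional d t m γ Sb S
      = (∫ _ in S, (1 : ℝ)) - B s s + ∑ i : Fin m, γ i * B (s - v i) (s - v i) := by
        rw [stageFunctional, hthreshold, Finset.sum_range]
        rfl
    _ = (∫ _ in S, (1 : ℝ)) - 2 * B s w + ∑ i : Fin m, γ i * B (v i) (v i) := by
        rw [(gaussForm_isSymm ht.le).sum_mul_apply_sub_sub (by rwa [← Finset.sum_range]) s v]
        ring
    _ = _ := by
        rw [hcross, integral_sub _ ((integrable_gaussConv ht w.2).integrableOn.const_mul 2),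
          integral_const_mul, Finset.sum_range]
        · rfl
        · exact integrableOn_const hSv.ne

end Gaussian

theorem multistage_stage_is_minimizing_movement_general (d : ℕ)
    (t : ℝ) (ht : 0 < t) (m : ℕ)
    (Sb : ℕ → Set (EuclideanSpace ℝ (Fin d)))
    (hSb : ∀ i < m, MeasurableSet (Sb i) ∧ volume (Sb i) < ⊤)
    (γ : ℕ → ℝ) (hγ : ∑ i ∈ Finset.range m, γ i = 1)
    (Sm : Set (EuclideanSpace ℝ (Fin d)))
    (hSm : Sm = {x : EuclideanSpace ℝ (Fin d) |
      1 / 2 ≤ gaussConv d t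
        (fun y => ∑ i ∈ Finset.range m, γ i * Set.indicator (Sb i) 1 y) x}) :
    ∀ S : Set (EuclideanSpace ℝ (Fin d)), MeasurableSet S → volume S < ⊤ →
      stageFunctional d t m γ Sb Sm ≤ stageFunctional d t m γ Sb S := by
  intro S hS hSv
  set w := fun y => ∑ i ∈ Finset.range m, γ i * Set.indicator (Sb i) 1 y
  have hw : Integrable w := integrable_finsetSum _ fun i hi =>
    (integrable_indicator_one (hSb i (Finset.mem_range.1 hi)).1
      (hSb i (Finset.mem_range.1 hi)).2).const_mul _
  have hSm_meas : MeasurableSet Sm :=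
    hSm ▸ measurableSet_le measurable_const (continuous_gaussConv ht.le hw).measurable
  have hSm_fin : volume Sm < ⊤ := hSm ▸ (integrable_gaussConv ht hw).measure_ge_lt_top one_half_pos
  have hSm_nonpos : Sm = {x | 1 - 2 * gaussConv d t w x ≤ 0} := by
    ext x
    simp only [hSm, Set.mem_ofPred_eq]
    constructor <;> intro h <;> linarith
  have hint : ∀ A : Set _, volume A < ⊤ → IntegrableOn (fun x => 1 - 2 * gaussConv d t w x) A :=
    fun A hA =>
      (integrableOn_const hA.ne).sub ((integrable_gaussConv ht hw).integrableOn.const_mul 2)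
  rw [stageFunctional_eq ht hSb hγ hSm_meas hSm_fin, stageFunctional_eq ht hSb hγ hS hSv,
    add_le_add_iff_right, hSm_nonpos]
  exact setIntegral_setOf_nonpos_le hS (hSm_nonpos ▸ hSm_meas) (hint S hSv)
    (hint _ (hSm_nonpos ▸ hSm_fin))

/-- Each stage of the multistage threshold dynamics scheme minimizes the
threshold-dynamics energy plus the weighted sum of squared `G_t`-distances to the
previous stages. -/
theorem multistage_stage_is_minimizing_movement (d : ℕ) (hd : 1 ≤ d)
    (t : ℝ) (ht : 0 < t) (m : ℕ)
    (Sb : ℕ → Set (EuclideanSpace ℝ (Fin d)))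
    (hSb : ∀ i < m, MeasurableSet (Sb i) ∧ volume (Sb i) < ⊤)
    (γ : ℕ → ℝ) (hγ : ∑ i ∈ Finset.range m, γ i = 1)
    (Sm : Set (EuclideanSpace ℝ (Fin d)))
    (hSm : Sm = {x : EuclideanSpace ℝ (Fin d) |
      1 / 2 ≤ gaussConv d t
        (fun y => ∑ i ∈ Finset.range m, γ i * Set.indicator (Sb i) 1 y) x}) :
    ∀ S : Set (EuclideanSpace ℝ (Fin d)), MeasurableSet S → volume S < ⊤ →
      stageFunctional d t m γ Sb Sm ≤ stageFunctional d t m γ Sb S :=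
  multistage_stage_is_minimizing_movement_general d t ht m Sb hSb γ hγ Sm hSm
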